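/- Hermite multinomial theorem: let β_1, …, β_t ∈ ℝ satisfy ∑_{i=1}^t β_i² = 1 and let d ∈ ℕ. Then for the normalized probabilists' Hermite polynomials H_d (orthonormal with respect to the standard Gaussian measure), H_d(β_1 X_1 + ⋯ + β_t X_t) = ∑_{d_1+⋯+d_t = d, d_i ≥ 0} √(d!/(d_1!⋯d_t!)) · ∏_{i=1}^t β_i^{d_i} H_{d_i}(X_i) as an identity of polynomials in X_1, …, X_t. -/

import Mathlib

/-!
The exponential generating function of the probabilists' Hermite polynomials is
`∑ Heₙ(y) tⁿ / n! = exp (y t - t² / 2)`. Rescaling `t ↦ βᵢ t` in the generating function at `xᵢ`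
and multiplying over `i` gives `exp ((∑ βᵢ xᵢ) t - (∑ βᵢ²) t² / 2)`, which is the generating
function at `∑ βᵢ xᵢ` precisely because `∑ βᵢ² = 1`. Comparing coefficients of `t^d` gives
`He_d(∑ βᵢ xᵢ) / d! = ∑_m ∏ βᵢ^mᵢ He_mᵢ(xᵢ) / mᵢ!`, and since `√(d! / ∏ mᵢ!) · ∏ √(mᵢ!) = √(d!)`
this is the normalized identity.
-/

open Polynomial

/-- The normalized probabilists' Hermite polynomial `H_r(y) = He_r(y)/√(r!)`,
orthonormal with respect to the standard Gaussian measure. -/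
noncomputable def normHermite (r : ℕ) (y : ℝ) : ℝ :=
  (aeval y (Polynomial.hermite r)) / Real.sqrt (r.factorial)

open PowerSeries Finset
open scoped Nat

lemma Nat.factorial_two_mul (j : ℕ) : (2 * j).factorial = 2 ^ j * j.factorial * (2 * j - 1)‼ := by
  cases j with
  | zero => rfl
  | succ j =>
    rw [show 2 * (j + 1) = 2 * j + 1 + 1 by ring, Nat.factorial_eq_mul_doubleFactorial,
      show 2 * j + 1 + 1 = 2 * (j + 1) by ring, Nat.doubleFactorial_two_mul,
      show 2 * (j + 1) - 1 = 2 * j + 1 by omega]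

lemma Finset.sum_finsuppAntidiag_eq_sum_piAntidiag {ι μ M : Type*} [DecidableEq ι]
    [AddCommMonoid μ] [HasAntidiagonal μ] [DecidableEq μ] [AddCommMonoid M]
    (s : Finset ι) (n : μ) (g : (ι → μ) → M) :
    ∑ l ∈ finsuppAntidiag s n, g l = ∑ f ∈ piAntidiag s n, g f := by
  rw [finsuppAntidiag, sum_map]
  exact sum_attach (piAntidiag s n) g

lemma PowerSeries.coeff_prod_eq_sum_piAntidiag {ι R : Type*} [DecidableEq ι] [CommSemiring R]
    (f : ι → R⟦X⟧) (d : ℕ) (s : Finset ι) :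
    coeff d (∏ i ∈ s, f i) = ∑ l ∈ piAntidiag s d, ∏ i ∈ s, coeff (l i) (f i) := by
  rw [coeff_prod, sum_finsuppAntidiag_eq_sum_piAntidiag s d fun l => ∏ i ∈ s, coeff (l i) (f i)]

lemma PowerSeries.rescale_expand {R : Type*} [CommRing R] (p : ℕ) (hp : p ≠ 0) (c : R)
    (f : R⟦X⟧) : rescale c (expand p hp f) = expand p hp (rescale (c ^ p) f) := by
  ext n
  rw [coeff_rescale, coeff_expand, coeff_expand]
  split_ifs with h
  · obtain ⟨k, rfl⟩ := h
    rw [coeff_rescale, Nat.mul_div_cancel_left k (Nat.pos_of_ne_zero hp), pow_mul]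
  · rw [mul_zero]

section HermiteEGF

variable {K : Type*} [Field K] [CharZero K]

/-- The formal power series `exp (y t - a t² / 2)`. -/
noncomputable def gaussianExpSeries (y a : K) : K⟦X⟧ :=
  rescale y (exp K) * expand 2 two_ne_zero (rescale (-a / 2) (exp K))

lemma gaussianExpSeries_mul (y a z b : K) :
    gaussianExpSeries y a * gaussianExpSeries z b = gaussianExpSeries (y + z) (a + b) := by
  rw [gaussianExpSeries, gaussianExpSeries, gaussianExpSeries, mul_mul_mul_comm,
    exp_mul_exp_eq_exp_add, ← map_mul, exp_mul_exp_eq_exp_add, neg_add, add_div]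

lemma gaussianExpSeries_zero : gaussianExpSeries (0 : K) 0 = 1 := by
  simp [gaussianExpSeries, rescale_zero]

lemma prod_gaussianExpSeries {ι : Type*} (s : Finset ι) (y a : ι → K) :
    ∏ i ∈ s, gaussianExpSeries (y i) (a i) = gaussianExpSeries (∑ i ∈ s, y i) (∑ i ∈ s, a i) := by
  induction s using Finset.cons_induction with
  | empty => simp [gaussianExpSeries_zero]
  | cons i s hi ih => rw [prod_cons, sum_cons, sum_cons, ih, gaussianExpSeries_mul]

lemma rescale_gaussianExpSeries (c y a : K) :
    rescale c (gaussianExpSeries y a) = gaussianExpSeries (c * y) (c ^ 2 * a) := by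
  rw [gaussianExpSeries, gaussianExpSeries, map_mul, rescale_rescale, rescale_expand,
    rescale_rescale, mul_comm y, show -a / 2 * c ^ 2 = -(c ^ 2 * a) / 2 by ring]

noncomputable def hermiteEGF (y : K) : K⟦X⟧ :=
  mk fun n => aeval y (hermite n) / n.factorial

lemma coeff_hermite_two_mul_add_div_factorial (j k : ℕ) :
    ((hermite (2 * j + k)).coeff k : K) / (2 * j + k).factorial =
      1 / k.factorial * ((-1 / 2) ^ j / j.factorial) := by
  rw [coeff_hermite_explicit, ← Nat.add_choose_mul_factorial_mul_factorial, Nat.factorial_two_mul]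
  have : ((2 * j - 1)‼ : K) ≠ 0 := Nat.cast_ne_zero.2 (Nat.doubleFactorial_pos _).ne'
  have : ((2 * j + k).choose k : K) ≠ 0 := Nat.cast_ne_zero.2 (Nat.choose_pos le_add_self).ne'
  push_cast
  field_simp
  rw [← mul_pow]
  norm_num

lemma hermiteEGF_eq (y : K) : hermiteEGF y = gaussianExpSeries y 1 := by
  ext n
  rw [hermiteEGF, coeff_mk, gaussianExpSeries, PowerSeries.coeff_mul,
    Nat.sum_antidiagonal_eq_sum_range_succ_mk, aeval_eq_sum_range, natDegree_hermite, sum_div]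
  refine sum_congr rfl fun k hk => ?_
  have hkn : k ≤ n := Nat.lt_succ_iff.1 (mem_range.1 hk)
  simp only [coeff_rescale, coeff_exp, PowerSeries.coeff_expand, map_div₀, map_one, map_natCast]
  split_ifs with h
  · obtain ⟨j, hj⟩ := h
    obtain rfl : n = 2 * j + k := by omega
    rw [hj, Nat.mul_div_cancel_left j two_pos, zsmul_eq_mul, mul_div_right_comm,
      coeff_hermite_two_mul_add_div_factorial]
    ring
  · rw [coeff_hermite_of_odd_add (Nat.odd_iff.2 (by omega))]
    simp

lemma hermiteEGF_sum_mul_eq_prod_rescale {ι : Type*} [Fintype ι] (β x : ι → K)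
    (hβ : ∑ i, β i ^ 2 = 1) :
    hermiteEGF (∑ i, β i * x i) = ∏ i, rescale (β i) (hermiteEGF (x i)) := by
  simp only [hermiteEGF_eq, rescale_gaussianExpSeries, prod_gaussianExpSeries, mul_one, hβ]

lemma aeval_hermite_sum_mul_div_factorial {ι : Type*} [Fintype ι] [DecidableEq ι] (β x : ι → K)
    (hβ : ∑ i, β i ^ 2 = 1) (d : ℕ) :
    aeval (∑ i, β i * x i) (hermite d) / d.factorial =
      ∑ m ∈ piAntidiag univ d, ∏ i, β i ^ m i * (aeval (x i) (hermite (m i)) / (m i).factorial) := by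
  have h := congrArg (PowerSeries.coeff d) (hermiteEGF_sum_mul_eq_prod_rescale β x hβ)
  simpa only [hermiteEGF, coeff_mk, coeff_prod_eq_sum_piAntidiag, coeff_rescale] using h

end HermiteEGF

lemma normHermite_eq_sqrt_factorial_mul (r : ℕ) (y : ℝ) :
    normHermite r y = √(r.factorial : ℝ) * (aeval y (hermite r) / r.factorial) := by
  rw [normHermite, mul_div_left_comm, Real.sqrt_div_self', mul_one_div]

/-- (Hermite multinomial theorem.)  If `∑ βᵢ² = 1`, then
`H_d(β₁X₁ + ⋯ + β_tX_t)
  = ∑_{d₁+⋯+d_t=d} √(d!/(d₁!⋯d_t!)) ∏ᵢ βᵢ^{dᵢ} H_{dᵢ}(Xᵢ)`. -/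
theorem hermite_multinomial
    (t : ℕ) (β : Fin t → ℝ) (hβ : ∑ i, (β i) ^ 2 = 1) (d : ℕ)
    (x : Fin t → ℝ) :
    normHermite d (∑ i, β i * x i) =
      ∑ m ∈ Finset.Nat.antidiagonalTuple t d,
        Real.sqrt ((d.factorial : ℝ) / ∏ i, ((m i).factorial : ℝ)) *
          ∏ i, β i ^ (m i) * normHermite (m i) (x i) := by
  rw [normHermite_eq_sqrt_factorial_mul, aeval_hermite_sum_mul_div_factorial β x hβ d,
    piAntidiag_univ_fin_eq_antidiagonalTuple, mul_sum]
  refine sum_congr rfl fun m _ => ?_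
  have hQ : (∏ i, ((m i).factorial : ℝ)) ≠ 0 := by positivity
  simp_rw [normHermite_eq_sqrt_factorial_mul, mul_left_comm (β _ ^ m _), prod_mul_distrib,
    ← Real.sqrt_prod _ fun _ _ => Nat.cast_nonneg _, ← mul_assoc,
    ← Real.sqrt_mul (div_nonneg (Nat.cast_nonneg _) (prod_nonneg fun _ _ => Nat.cast_nonneg _)),
    div_mul_cancel₀ _ hQ]
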